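/- arXiv:2403.00481 — 9 statements merged into one kernel-verified Lean document; each statement's English description precedes it below -/
import Mathlib

section
/- Let A be a unital C*-algebra, V a finite set and N ≥ 1 a natural number. Let q = (q^{ks}_{ir}) be a quantum permutation matrix over A indexed by V × {1,…,N} (rows indexed by pairs (k,s), columns by pairs (i,r)) satisfying relation (R1): ∑_{r=1}^N q^{ks}_{ir} = ∑_{r=1}^N q^{ks'}_{ir} for all i,k ∈ V and s,s' ∈ {1,…,N}. Then for any fixed s ∈ {1,…,N}, the V × V matrix Q with entries Q^k_i := ∑_{r=1}^N q^{ks}_{ir} is a quantum permutation matrix over A, i.e. each Q^k_i is a self-adjoint idempotent and ∑_{i∈V} Q^k_i = 1 and ∑_{k∈V} Q^k_i = 1. -/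
open scoped BigOperators

/-- A quantum permutation matrix over a unital ring with star, indexed by a finite set `X`:
all entries are self-adjoint idempotents and all row and column sums equal `1`. -/
def IsQuantumPermutation {X A : Type*} [Fintype X] [Ring A] [StarRing A]
    (p : X → X → A) : Prop :=
  (∀ x y, star (p x y) = p x y) ∧ (∀ x y, p x y * p x y = p x y) ∧
  (∀ x, ∑ y, p x y = 1) ∧ (∀ y, ∑ x, p x y = 1)

lemma ortho_of_sum_one {A : Type*} [CStarAlgebra A] {ι : Type*} [Fintype ι] [DecidableEq ι]
    (p : ι → A) (hsa : ∀ j, star (p j) = p j) (hid : ∀ j, p j * p j = p j)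
    (hsum : ∑ j, p j = 1) {i j : ι} (hij : i ≠ j) : p i * p j = 0 := by
  let _ : PartialOrder A := CStarAlgebra.spectralOrder A
  have _ : StarOrderedRing A := CStarAlgebra.spectralOrderedRing A
  have key : ∑ k, p i * p k * p i = p i := by
    rw [← Finset.sum_mul, ← Finset.mul_sum, hsum, mul_one, hid]
  have hsplit : p i * p i * p i + ∑ k ∈ Finset.univ.erase i, p i * p k * p i = p i :=
    (Finset.add_sum_erase Finset.univ (fun k => p i * p k * p i) (Finset.mem_univ i)).trans key
  have hzero : ∑ k ∈ Finset.univ.erase i, p i * p k * p i = 0 := by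
    rw [hid, hid] at hsplit
    exact (add_eq_left).mp hsplit
  have hstar : ∀ k, star (p k * p i) * (p k * p i) = p i * p k * p i := by
    intro k
    rw [star_mul, hsa, hsa, mul_assoc, ← mul_assoc (p k), hid, ← mul_assoc]
  have hnn : ∀ k ∈ Finset.univ.erase i, (0 : A) ≤ p i * p k * p i := by
    intro k _
    rw [← hstar k]; exact star_mul_self_nonneg _
  have heach : p i * p j * p i = 0 :=
    (Finset.sum_eq_zero_iff_of_nonneg hnn).mp hzero j
      (Finset.mem_erase.mpr ⟨hij.symm, Finset.mem_univ j⟩)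
  have hji : p j * p i = 0 := by
    have : star (p j * p i) * (p j * p i) = 0 := by rw [hstar j]; exact heach
    exact (CStarRing.star_mul_self_eq_zero_iff _).mp this
  have : star (p j * p i) = 0 := by rw [hji, star_zero]
  rwa [star_mul, hsa, hsa] at this

/-- If a quantum permutation matrix `q` indexed by `V × {1,…,N}` satisfies relation (R1),
then for any fixed `s`, the matrix `Q^k_i = ∑_r q^{ks}_{ir}` is a quantum permutation
matrix over `A` indexed by `V`. -/
theorem stmt0 {A : Type*} [CStarAlgebra A] {V : Type*} [Fintype V]
    {N : ℕ} (hN : 1 ≤ N)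
    (q : V × Fin N → V × Fin N → A)
    (hq : IsQuantumPermutation q)
    (hR1 : ∀ (i k : V) (s s' : Fin N),
      (∑ r : Fin N, q (k, s) (i, r)) = ∑ r : Fin N, q (k, s') (i, r))
    (s : Fin N) :
    IsQuantumPermutation (fun k i : V => ∑ r : Fin N, q (k, s) (i, r)) := by
  classical
  obtain ⟨hsa, hid, hrow, hcol⟩ := hq
  have horth : ∀ (x : V × Fin N) {y z : V × Fin N}, y ≠ z → q x y * q x z = 0 := by
    intro x y z hyz
    exact ortho_of_sum_one (q x) (fun j => hsa x j) (fun j => hid x j) (hrow x) hyz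
  refine ⟨?_, ?_, ?_, ?_⟩
  · intro k i
    simp only [star_sum]
    exact Finset.sum_congr rfl fun r _ => hsa _ _
  · intro k i
    simp only [Finset.sum_mul, Finset.mul_sum]
    rw [Finset.sum_comm]
    refine Finset.sum_congr rfl fun r _ => ?_
    rw [Finset.sum_eq_single r]
    · exact hid _ _
    · intro r' _ hr'
      exact horth _ (fun h => hr' (congrArg Prod.snd h).symm)
    · simp
  · intro k
    rw [← Fintype.sum_prod_type]
    exact hrow (k, s)
  · intro i
    have hsmul : N • (∑ k : V, ∑ r : Fin N, q (k, s) (i, r)) = N • (1 : A) := by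
      have h1 : ∀ k : V, N • (∑ r : Fin N, q (k, s) (i, r))
          = ∑ s' : Fin N, ∑ r : Fin N, q (k, s') (i, r) := by
        intro k
        rw [Finset.sum_congr rfl fun s' _ => (hR1 i k s' s), Finset.sum_const,
          Finset.card_univ, Fintype.card_fin]
      calc N • (∑ k : V, ∑ r : Fin N, q (k, s) (i, r))
          = ∑ k : V, N • (∑ r : Fin N, q (k, s) (i, r)) := by rw [Finset.smul_sum]
        _ = ∑ k : V, ∑ s' : Fin N, ∑ r : Fin N, q (k, s') (i, r) :=
            Finset.sum_congr rfl fun k _ => h1 k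
        _ = ∑ k : V, ∑ r : Fin N, ∑ s' : Fin N, q (k, s') (i, r) :=
            Finset.sum_congr rfl fun k _ => Finset.sum_comm
        _ = ∑ r : Fin N, ∑ k : V, ∑ s' : Fin N, q (k, s') (i, r) := Finset.sum_comm
        _ = ∑ r : Fin N, (1 : A) := by
            refine Finset.sum_congr rfl fun r _ => ?_
            rw [← hcol (i, r), Fintype.sum_prod_type]
        _ = N • (1 : A) := by simp
    have hN0 : (N : ℂ) ≠ 0 := by exact_mod_cast Nat.one_le_iff_ne_zero.mp hN
    rw [← Nat.cast_smul_eq_nsmul ℂ, ← Nat.cast_smul_eq_nsmul ℂ] at hsmul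
    have := congrArg (fun x => (N : ℂ)⁻¹ • x) hsmul
    simpa [smul_smul, inv_mul_cancel₀ hN0] using this
end

section
/- Let (V,N,E) be a uniform labeled multigraph and A a unital C*-algebra. Let q = (q^{ks}_{ir}) be a quantum permutation matrix over A indexed by V × {1,…,N} satisfying relations (R2), (R3) and the flipped relations (R2'), (R3'). For edges (k,l,s),(i,j,r) ∈ E set u^{(k,l)s}_{(i,j)r} := q^{ks}_{ir} q^{ls}_{jr}. Then for all edges (k,l,s), (k',l',s') ∈ E: ∑_{(i,j,r)∈E} u^{(k,l)s}_{(i,j)r} (u^{(k',l')s'}_{(i,j)r})* = δ_{k,k'} δ_{l,l'} δ_{s,s'} · 1. -/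
open scoped BigOperators

/-- `edeg E i j` is the number of labels `r` such that `(i,j,r)` is an edge, i.e. `|E^i_j|`. -/
def edeg {V : Type*} [DecidableEq V] {N : ℕ} (E : Finset (V × V × Fin N)) (i j : V) : ℕ :=
  (E.filter fun e => e.1 = i ∧ e.2.1 = j).card

/-- In a C*-algebra, a family of projections summing to `1` is pairwise orthogonal. -/
lemma sum_proj_orth {A : Type*} [CStarAlgebra A] {X : Type*} [Fintype X] [DecidableEq X]
    (p : X → A) (hstar : ∀ x, star (p x) = p x) (hidem : ∀ x, p x * p x = p x)
    (hsum : ∑ x, p x = 1) {x x' : X} (hxx : x ≠ x') : p x * p x' = 0 := by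
  letI := CStarAlgebra.spectralOrder A
  haveI := CStarAlgebra.spectralOrderedRing A
  have h1 : ∑ z, p x' * p z * p x' = p x' := by
    simp only [mul_assoc]
    rw [← Finset.mul_sum, ← Finset.sum_mul, hsum, one_mul, hidem]
  have key : ∑ z ∈ Finset.univ.erase x', p x' * p z * p x' = 0 := by
    have h2 := Finset.sum_erase_add Finset.univ (fun z => p x' * p z * p x') (Finset.mem_univ x')
    simp only [h1, hidem] at h2
    exact add_eq_right.mp h2
  have hterm : ∀ z, p x' * p z * p x' = star (p z * p x') * (p z * p x') := by
    intro z
    rw [star_mul, hstar, hstar, ← mul_assoc, mul_assoc (p x') (p z) (p z), hidem]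
  have hnn : ∀ z ∈ Finset.univ.erase x', (0 : A) ≤ p x' * p z * p x' := by
    intro z _
    rw [hterm z]
    exact star_mul_self_nonneg _
  have hz : p x' * p x * p x' = 0 :=
    (Finset.sum_eq_zero_iff_of_nonneg hnn).mp key x
      (Finset.mem_erase.mpr ⟨hxx, Finset.mem_univ x⟩)
  rw [hterm x] at hz
  exact CStarRing.star_mul_self_eq_zero_iff _ |>.mp hz

lemma edeg_eq_N_mem {V : Type*} [DecidableEq V] {N : ℕ} {E : Finset (V × V × Fin N)}
    {i j : V} (h : edeg E i j = N) (r : Fin N) : (i, j, r) ∈ E := by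
  classical
  set F := E.filter fun e => e.1 = i ∧ e.2.1 = j with hF
  have hinj : Set.InjOn (fun e : V × V × Fin N => e.2.2) F := by
    intro a ha b hb hab
    simp only [hF, Finset.coe_filter, Set.mem_setOf_eq] at ha hb
    obtain ⟨a1, a2, a3⟩ := a
    obtain ⟨b1, b2, b3⟩ := b
    simp_all [Prod.ext_iff]
  have hcard : (F.image fun e => e.2.2).card = N := by
    rw [Finset.card_image_of_injOn hinj]; exact h
  have huniv : (F.image fun e => e.2.2) = Finset.univ :=
    Finset.eq_univ_of_card _ (by simp [hcard])
  have hr : r ∈ F.image fun e => e.2.2 := huniv ▸ Finset.mem_univ r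
  obtain ⟨e, heF, he⟩ := Finset.mem_image.mp hr
  obtain ⟨heE, h1, h2⟩ := Finset.mem_filter.mp heF
  obtain ⟨e1, e2, e3⟩ := e
  simp_all

lemma mid_zero {A : Type*} [Ring A] {a b c d : A} (h : b * c = 0) :
    (a * b) * (c * d) = 0 := by
  rw [mul_assoc, ← mul_assoc b c d, h, zero_mul, mul_zero]

lemma mid_idem {A : Type*} [Ring A] {a b d : A} (h : b * b = b) :
    (a * b) * (b * d) = a * (b * d) := by
  rw [mul_assoc, ← mul_assoc b b d, h]

/-- Unitarity (row orthogonality) of the edge corepresentation matrix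
`u^{(k,l)s}_{(i,j)r} = q^{ks}_{ir} q^{ls}_{jr}` for a uniform multigraph:
`∑_{τ∈E} u^σ_τ (u^{σ'}_τ)* = δ_{σ,σ'} 1`. -/
theorem stmt2 {A : Type*} [CStarAlgebra A]
    {V : Type*} [Fintype V] [DecidableEq V] {N : ℕ} (hN : 1 ≤ N)
    (E : Finset (V × V × Fin N))
    (hE : ∀ (i j : V) (r r' : Fin N), (i, j, r) ∈ E → r' ≤ r → (i, j, r') ∈ E)
    (hUnif : ∀ i j : V, edeg E i j = 0 ∨ edeg E i j = N)
    (q : V × Fin N → V × Fin N → A)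
    (hq : IsQuantumPermutation q)
    (hR2 : ∀ (i j k l : V) (r s s' : Fin N), (i, j, r) ∈ E → edeg E k l = 0 →
      q (k, s) (i, r) * q (l, s') (j, r) = 0)
    (hR3 : ∀ (i j k l : V) (r s s' : Fin N), (i, j, r) ∈ E → edeg E k l ≠ 0 → s ≠ s' →
      q (k, s) (i, r) * q (l, s') (j, r) = 0)
    (hR2' : ∀ (i j k l : V) (r s s' : Fin N), (i, j, r) ∈ E → edeg E k l = 0 →
      q (i, r) (k, s) * q (j, r) (l, s') = 0)
    (hR3' : ∀ (i j k l : V) (r s s' : Fin N), (i, j, r) ∈ E → edeg E k l ≠ 0 → s ≠ s' →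
      q (i, r) (k, s) * q (j, r) (l, s') = 0)
    (k l : V) (s : Fin N) (hkls : (k, l, s) ∈ E)
    (k' l' : V) (s' : Fin N) (hk'l's' : (k', l', s') ∈ E) :
    (∑ τ ∈ E, (q (k, s) (τ.1, τ.2.2) * q (l, s) (τ.2.1, τ.2.2)) *
        star (q (k', s') (τ.1, τ.2.2) * q (l', s') (τ.2.1, τ.2.2))) =
      if k = k' ∧ l = l' ∧ s = s' then 1 else 0 := by
  classical
  obtain ⟨hqstar, hqidem, hqrow, hqcol⟩ := hq
  -- column orthogonality
  have col : ∀ (x x' y : V × Fin N), x ≠ x' → q x y * q x' y = 0 := fun x x' y hxx =>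
    sum_proj_orth (fun z => q z y) (fun z => hqstar z y) (fun z => hqidem z y) (hqcol y) hxx
  -- Lemma A: vanishing off the edge diagonal
  have lemA : ∀ (i j : V) (r t : Fin N), ¬(t = r ∧ (i, j, r) ∈ E) →
      q (k, s) (i, r) * q (l, s) (j, t) = 0 := by
    intro i j r t h
    rcases hUnif i j with h0 | hNe
    · exact hR2' k l i j s r t hkls h0
    · rcases eq_or_ne r t with rfl | hrt
      · exact absurd ⟨rfl, edeg_eq_N_mem hNe r⟩ h
      · exact hR3' k l i j s r t hkls (by rw [hNe]; omega) hrt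
  -- the summand as a function of the pair of column indices
  set g : (V × Fin N) × (V × Fin N) → A := fun p =>
    (q (k, s) p.1 * q (l, s) p.2) * (q (l', s') p.2 * q (k', s') p.1) with hg
  set φ : V × V × Fin N → (V × Fin N) × (V × Fin N) := fun τ =>
    ((τ.1, τ.2.2), (τ.2.1, τ.2.2)) with hφ
  have step1 : (∑ τ ∈ E, (q (k, s) (τ.1, τ.2.2) * q (l, s) (τ.2.1, τ.2.2)) *
        star (q (k', s') (τ.1, τ.2.2) * q (l', s') (τ.2.1, τ.2.2))) =
      ∑ τ ∈ E, g (φ τ) := by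
    refine Finset.sum_congr rfl fun τ _ => ?_
    rw [star_mul, hqstar, hqstar]
  have hφinj : Set.InjOn φ E := by
    intro a _ b _ hab
    obtain ⟨a1, a2, a3⟩ := a
    obtain ⟨b1, b2, b3⟩ := b
    simp_all [hφ, Prod.ext_iff]
  have step2 : ∑ τ ∈ E, g (φ τ) = ∑ p ∈ E.image φ, g p :=
    (Finset.sum_image (by intro a ha b hb hab; exact hφinj ha hb hab)).symm
  have step3 : ∑ p ∈ E.image φ, g p = ∑ p : (V × Fin N) × (V × Fin N), g p := by
    refine Finset.sum_subset (Finset.subset_univ _) ?_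
    rintro ⟨⟨i, r⟩, ⟨j, t⟩⟩ _ hnot
    have hA : q (k, s) (i, r) * q (l, s) (j, t) = 0 := by
      refine lemA i j r t fun ⟨hrt, hmem⟩ => ?_
      subst hrt
      exact hnot (Finset.mem_image.mpr ⟨(i, j, t), hmem, rfl⟩)
    show (q (k, s) (i, r) * q (l, s) (j, t)) * _ = 0
    rw [hA, zero_mul]
  rw [step1, step2, step3, Fintype.sum_prod_type]
  by_cases hls : l = l' ∧ s = s'
  · obtain ⟨rfl, rfl⟩ := hls
    simp only [true_and]
    have hinner : ∀ x : V × Fin N, (∑ y : V × Fin N, g (x, y)) =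
        q (k, s) x * q (k', s) x := by
      intro x
      have : ∀ y : V × Fin N, g (x, y) = q (k, s) x * (q (l, s) y * q (k', s) x) :=
        fun y => mid_idem (hqidem _ _)
      calc (∑ y : V × Fin N, g (x, y))
          = ∑ y : V × Fin N, q (k, s) x * (q (l, s) y * q (k', s) x) := by
            exact Finset.sum_congr rfl fun y _ => this y
        _ = q (k, s) x * ((∑ y : V × Fin N, q (l, s) y) * q (k', s) x) := by
            rw [← Finset.mul_sum, ← Finset.sum_mul]
        _ = q (k, s) x * q (k', s) x := by rw [hqrow (l, s), one_mul]
    rw [Finset.sum_congr rfl fun x _ => hinner x]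
    by_cases hkk : k = k'
    · subst hkk
      simp only [if_pos rfl]
      rw [Finset.sum_congr rfl fun x _ => hqidem (k, s) x]
      exact hqrow (k, s)
    · rw [if_neg (by tauto)]
      refine Finset.sum_eq_zero fun x _ => ?_
      exact col (k, s) (k', s) x (by simp [hkk])
  · rw [if_neg (by tauto)]
    refine Finset.sum_eq_zero fun x _ => Finset.sum_eq_zero fun y _ => ?_
    have hne : ((l : V), s) ≠ (l', s') := by
      intro h
      exact hls ⟨congrArg Prod.fst h, congrArg Prod.snd h⟩
    exact mid_zero (col (l, s) (l', s') y hne)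
end

section
/- Let (V,N,E) be a uniform labeled multigraph and A a unital C*-algebra. Let q = (q^{ks}_{ir}) be a quantum permutation matrix over A indexed by V × {1,…,N} satisfying relations (R2), (R3) and the flipped relations (R2'), (R3'). For edges (k,l,s),(i,j,r) ∈ E set u^{(k,l)s}_{(i,j)r} := q^{ks}_{ir} q^{ls}_{jr}. Then for all edges (k,l,s), (k',l',s') ∈ E: ∑_{(i,j,r)∈E} (u^{(i,j)r}_{(k,l)s})* u^{(i,j)r}_{(k',l')s'} = δ_{k,k'} δ_{l,l'} δ_{s,s'} · 1. -/
open scoped BigOperators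

lemma qp_orth {X A : Type*} [Fintype X] [DecidableEq X] [CStarAlgebra A] (p : X → X → A)
    (hstar : ∀ x y, star (p x y) = p x y) (hidem : ∀ x y, p x y * p x y = p x y)
    (hrow : ∀ x, ∑ y, p x y = 1) {x y y' : X} (h : y ≠ y') :
    p x y * p x y' = 0 := by
  letI := CStarAlgebra.spectralOrder A
  haveI := CStarAlgebra.spectralOrderedRing A
  set P := p x y with hP
  set Q := p x y' with hQ
  have hnn : ∀ z, (0 : A) ≤ p x z := fun z => by
    have := star_mul_self_nonneg (p x z)
    rwa [hstar, hidem] at this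
  have hsum : P + Q + ∑ z ∈ (Finset.univ.erase y).erase y', p x z = 1 := by
    have h1 : Q + ∑ z ∈ (Finset.univ.erase y).erase y', p x z
        = ∑ z ∈ Finset.univ.erase y, p x z := by
      rw [Finset.add_sum_erase _ _ (Finset.mem_erase.mpr ⟨Ne.symm h, Finset.mem_univ y'⟩)]
    rw [add_assoc, h1, Finset.add_sum_erase _ _ (Finset.mem_univ y), hrow]
  have hle : P + Q ≤ 1 := by
    rw [← hsum]
    exact le_add_of_nonneg_right (Finset.sum_nonneg fun z _ => hnn z)
  have hconj := star_left_conjugate_le_conjugate hle Q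
  rw [hstar x y'] at hconj
  have h1 : Q * (P + Q) * Q = Q * P * Q + Q := by
    rw [mul_add, add_mul, mul_assoc Q Q Q, hidem, hidem]
  have h2 : Q * 1 * Q = Q := by rw [mul_one, hidem]
  rw [h1, h2] at hconj
  have hle0 : Q * P * Q ≤ 0 := add_le_iff_nonpos_left.mp hconj
  have hge0 : (0 : A) ≤ Q * P * Q := by
    have := star_mul_self_nonneg (P * Q)
    rwa [star_mul, hstar, hstar, mul_assoc, ← mul_assoc P P Q, hidem, ← mul_assoc] at this
  have hzero : star (P * Q) * (P * Q) = 0 := by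
    rw [star_mul, hstar, hstar, mul_assoc, ← mul_assoc P P Q, hidem, ← mul_assoc]
    exact le_antisymm hle0 hge0
  exact (CStarRing.star_mul_self_eq_zero_iff _).mp hzero

/-- For a uniform multigraph, `(i,j,r) ∈ E` iff `edeg E i j ≠ 0`. -/
lemma mem_iff_edeg_ne {V : Type*} [DecidableEq V] {N : ℕ} (E : Finset (V × V × Fin N))
    (hUnif : ∀ i j : V, edeg E i j = 0 ∨ edeg E i j = N) (i j : V) (r : Fin N) :
    (i, j, r) ∈ E ↔ edeg E i j ≠ 0 := by
  classical
  constructor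
  · intro hmem h0
    have : (i, j, r) ∈ E.filter fun e => e.1 = i ∧ e.2.1 = j :=
      Finset.mem_filter.mpr ⟨hmem, rfl, rfl⟩
    exact absurd (Finset.card_eq_zero.mp h0 ▸ this) (Finset.notMem_empty _)
  · intro h
    have hN' : edeg E i j = N := (hUnif i j).resolve_left h
    set F := E.filter fun e : V × V × Fin N => e.1 = i ∧ e.2.1 = j with hF
    have hinj : Set.InjOn (fun e : V × V × Fin N => e.2.2) F := by
      intro a ha b hb hab
      obtain ⟨_, ha1, ha2⟩ := Finset.mem_filter.mp ha
      obtain ⟨_, hb1, hb2⟩ := Finset.mem_filter.mp hb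
      exact Prod.ext (ha1.trans hb1.symm) (Prod.ext (ha2.trans hb2.symm) hab)
    have hcard : (F.image fun e => e.2.2).card = N := by
      rw [Finset.card_image_of_injOn hinj]; exact hN'
    have huniv : F.image (fun e => e.2.2) = Finset.univ :=
      Finset.eq_univ_of_card _ (by simp [hcard])
    have hr : r ∈ F.image (fun e => e.2.2) := huniv ▸ Finset.mem_univ r
    obtain ⟨e, heF, he⟩ := Finset.mem_image.mp hr
    obtain ⟨heE, he1, he2⟩ := Finset.mem_filter.mp heF
    have : e = (i, j, r) := Prod.ext he1 (Prod.ext he2 he)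
    exact this ▸ heE

/-- Unitarity (column orthogonality) of the edge corepresentation matrix
`u^{(k,l)s}_{(i,j)r} = q^{ks}_{ir} q^{ls}_{jr}` for a uniform multigraph:
`∑_{τ∈E} (u^τ_σ)* u^τ_{σ'} = δ_{σ,σ'} 1`. -/
theorem stmt3 {A : Type*} [CStarAlgebra A]
    {V : Type*} [Fintype V] [DecidableEq V] {N : ℕ} (hN : 1 ≤ N)
    (E : Finset (V × V × Fin N))
    (hE : ∀ (i j : V) (r r' : Fin N), (i, j, r) ∈ E → r' ≤ r → (i, j, r') ∈ E)
    (hUnif : ∀ i j : V, edeg E i j = 0 ∨ edeg E i j = N)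
    (q : V × Fin N → V × Fin N → A)
    (hq : IsQuantumPermutation q)
    (hR2 : ∀ (i j k l : V) (r s s' : Fin N), (i, j, r) ∈ E → edeg E k l = 0 →
      q (k, s) (i, r) * q (l, s') (j, r) = 0)
    (hR3 : ∀ (i j k l : V) (r s s' : Fin N), (i, j, r) ∈ E → edeg E k l ≠ 0 → s ≠ s' →
      q (k, s) (i, r) * q (l, s') (j, r) = 0)
    (hR2' : ∀ (i j k l : V) (r s s' : Fin N), (i, j, r) ∈ E → edeg E k l = 0 →
      q (i, r) (k, s) * q (j, r) (l, s') = 0)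
    (hR3' : ∀ (i j k l : V) (r s s' : Fin N), (i, j, r) ∈ E → edeg E k l ≠ 0 → s ≠ s' →
      q (i, r) (k, s) * q (j, r) (l, s') = 0)
    (k l : V) (s : Fin N) (hkls : (k, l, s) ∈ E)
    (k' l' : V) (s' : Fin N) (hk'l's' : (k', l', s') ∈ E) :
    (∑ τ ∈ E, star (q (τ.1, τ.2.2) (k, s) * q (τ.2.1, τ.2.2) (l, s)) *
        (q (τ.1, τ.2.2) (k', s') * q (τ.2.1, τ.2.2) (l', s'))) =
      if k = k' ∧ l = l' ∧ s = s' then 1 else 0 := by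
  classical
  obtain ⟨hstar, hidem, hrow, hcol⟩ := hq
  by_cases hks : k = k' ∧ s = s'
  · obtain ⟨hk, hs⟩ := hks
    subst hk; subst hs
    -- key vanishing lemma
    have hz : ∀ (i j l0 : V) (r r' : Fin N), (k, l0, s) ∈ E →
        ((i, j, r') ∉ E ∨ r ≠ r') → q (i, r) (k, s) * q (j, r') (l0, s) = 0 := by
      intro i j l0 r r' hkl0 hcond
      by_cases h0 : edeg E i j = 0
      · exact hR2 k l0 i j s r r' hkl0 h0
      · rcases hcond with hnot | hne
        · exact absurd ((mem_iff_edeg_ne E hUnif i j r').mpr h0) hnot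
        · exact hR3 k l0 i j s r r' hkl0 h0 hne
    -- rewrite each term
    have hterm : ∀ τ : V × V × Fin N,
        star (q (τ.1, τ.2.2) (k, s) * q (τ.2.1, τ.2.2) (l, s)) *
          (q (τ.1, τ.2.2) (k, s) * q (τ.2.1, τ.2.2) (l', s)) =
        q (τ.2.1, τ.2.2) (l, s) * (q (τ.1, τ.2.2) (k, s) * q (τ.2.1, τ.2.2) (l', s)) := by
      intro τ
      rw [star_mul, hstar, hstar, mul_assoc, ← mul_assoc (q (τ.1, τ.2.2) (k, s)), hidem]
    rw [Finset.sum_congr rfl fun τ _ => hterm τ]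
    -- extend the sum to the whole type
    rw [Finset.sum_subset (Finset.subset_univ E) (fun τ _ hτ => by
      rw [hz τ.1 τ.2.1 l' τ.2.2 τ.2.2 hk'l's' (Or.inl hτ), mul_zero])]
    -- reorganize the sum
    have hsplit : (∑ τ : V × V × Fin N,
        q (τ.2.1, τ.2.2) (l, s) * (q (τ.1, τ.2.2) (k, s) * q (τ.2.1, τ.2.2) (l', s))) =
        ∑ jr : V × Fin N, q jr (l, s) * ∑ i : V, q (i, jr.2) (k, s) * q jr (l', s) := by
      rw [Fintype.sum_prod_type]
      rw [Finset.sum_comm]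
      refine Finset.sum_congr rfl fun jr _ => ?_
      rw [Finset.mul_sum]
    rw [hsplit]
    -- collapse the inner sum
    have hinner : ∀ jr : V × Fin N, (∑ i : V, q (i, jr.2) (k, s) * q jr (l', s)) =
        q jr (l', s) := by
      intro jr
      have h1 : (∑ x : V × Fin N, q x (k, s) * q jr (l', s)) = q jr (l', s) := by
        rw [← Finset.sum_mul, hcol, one_mul]
      rw [Fintype.sum_prod_type] at h1
      calc ∑ i : V, q (i, jr.2) (k, s) * q jr (l', s)
          = ∑ i : V, ∑ r' : Fin N, q (i, r') (k, s) * q jr (l', s) := by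
            refine Finset.sum_congr rfl fun i _ => ?_
            exact (Finset.sum_eq_single jr.2
              (fun r' _ hne => by
                have := hz i jr.1 l' r' jr.2 hk'l's' (Or.inr hne)
                simpa using this)
              (fun habs => absurd (Finset.mem_univ jr.2) habs)).symm
        _ = q jr (l', s) := h1
    rw [Finset.sum_congr rfl fun jr _ => by rw [hinner jr]]
    by_cases hl : l = l'
    · subst hl
      rw [Finset.sum_congr rfl fun jr _ => hidem jr (l, s), hcol,
        if_pos (show k = k ∧ l = l ∧ s = s from ⟨rfl, rfl, rfl⟩)]
    · have : ∀ jr : V × Fin N, q jr (l, s) * q jr (l', s) = 0 := fun jr =>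
        qp_orth q hstar hidem hrow (fun h => hl (congrArg Prod.fst h))
      rw [Finset.sum_congr rfl fun jr _ => this jr, Finset.sum_const_zero,
        if_neg (fun ⟨_, h2, _⟩ => hl h2)]
  · have hne : ((k, s) : V × Fin N) ≠ (k', s') := fun h => by
      injection h with h1 h2; exact hks ⟨h1, h2⟩
    have : ∀ τ : V × V × Fin N,
        star (q (τ.1, τ.2.2) (k, s) * q (τ.2.1, τ.2.2) (l, s)) *
          (q (τ.1, τ.2.2) (k', s') * q (τ.2.1, τ.2.2) (l', s')) = 0 := by
      intro τ
      rw [star_mul, hstar, hstar, mul_assoc, ← mul_assoc (q (τ.1, τ.2.2) (k, s)),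
        qp_orth q hstar hidem hrow hne, zero_mul, mul_zero]
    rw [Finset.sum_congr rfl fun τ _ => this τ, Finset.sum_const_zero,
      if_neg (fun ⟨h1, _, h3⟩ => hks ⟨h1, h3⟩)]
end

section
/- Let (V,N,E) be a uniform labeled multigraph and A a unital C*-algebra. Let q = (q^{ks}_{ir}) be a quantum permutation matrix over A indexed by V × {1,…,N} satisfying relations (R2), (R3) and the flipped relations (R2'), (R3'). For edges (k,l,s),(i,j,r) ∈ E set u^{(k,l)s}_{(i,j)r} := q^{ks}_{ir} q^{ls}_{jr}. Then the contragredient matrix (with entries (u^{σ}_{τ})*) is also unitary; explicitly, for all edges (k,l,s), (k',l',s') ∈ E: ∑_{(i,j,r)∈E} (u^{(k,l)s}_{(i,j)r})* u^{(k',l')s'}_{(i,j)r} = δ_{k,k'} δ_{l,l'} δ_{s,s'} · 1 and ∑_{(i,j,r)∈E} u^{(i,j)r}_{(k,l)s} (u^{(i,j)r}_{(k',l')s'})* = δ_{k,k'} δ_{l,l'} δ_{s,s'} · 1. -/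
open scoped BigOperators

/-!
For `(k, s) ≠ (k', s')` every summand of the first identity contains the product of two distinct
projections of one column of `q`, which vanishes. For `(k, s) = (k', s')` the summand becomes
`q^{ls}_{jr} q^{ks}_{ir} q^{l's}_{jr}`. By (R2'), (R3') and uniformity, `q^{ks}_{ir'} q^{l's}_{jr}`
vanishes unless `r' = r` and `(i, j, r) ∈ E`, so the sum over edges may be replaced by a sum over
all `(i, r')`; the row sum `∑ q^{ks}_{ir'} = 1` then collapses it to
`∑_{(j,r)} q^{ls}_{jr} q^{l's}_{jr} = δ_{l l'}`.

The second identity is the adjoint form of the first one for the transpose of `q` on the graph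
with reversed edges, where (R2), (R3) play the role of (R2'), (R3').
-/

open Finset Function

section Projections

variable {A : Type*} [CStarAlgebra A]

theorem mul_eq_zero_of_sum_eq_one {ι : Type*} [Fintype ι] {p : ι → A}
    (hp : ∀ i, IsStarProjection (p i)) (hsum : ∑ i, p i = 1) {a b : ι} (hab : a ≠ b) :
    p a * p b = 0 := by
  classical
  let _ : PartialOrder A := CStarAlgebra.spectralOrder A
  have _ : StarOrderedRing A := CStarAlgebra.spectralOrderedRing A
  have hsq : ∀ i, p a * p i * p a = star (p i * p a) * (p i * p a) := fun i => by
    rw [star_mul, (hp i).isSelfAdjoint.star_eq, (hp a).isSelfAdjoint.star_eq,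
      ← mul_assoc (p a * p i), mul_assoc (p a) (p i) (p i), (hp i).isIdempotentElem.eq]
  -- `p a = ∑ i, p a * p i * p a` is a sum of positive terms whose `i = a` term is `p a`.
  have htotal : ∑ i, p a * p i * p a = p a := by
    rw [← sum_mul, ← mul_sum, hsum, mul_one, (hp a).isIdempotentElem.eq]
  have hrest : ∑ i ∈ univ.erase a, p a * p i * p a = 0 := by
    have h := add_sum_erase univ (fun i => p a * p i * p a) (mem_univ a)
    rw [htotal, (hp a).isIdempotentElem.eq, (hp a).isIdempotentElem.eq] at h
    exact add_eq_left.mp h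
  have hba : star (p b * p a) * (p b * p a) = 0 := by
    rw [← hsq]
    have hnonneg : ∀ i ∈ univ.erase a, 0 ≤ p a * p i * p a :=
      fun i _ => hsq i ▸ star_mul_self_nonneg _
    exact (sum_eq_zero_iff_of_nonneg hnonneg).mp hrest b (mem_erase.2 ⟨hab.symm, mem_univ b⟩)
  have h := congrArg star ((CStarRing.star_mul_self_eq_zero_iff _).mp hba)
  rwa [star_mul, (hp a).isSelfAdjoint.star_eq, (hp b).isSelfAdjoint.star_eq, star_zero] at h

namespace IsQuantumPermutation

variable {X : Type*} [Fintype X] {q : X → X → A}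

theorem isStarProjection (hq : IsQuantumPermutation q) (x y : X) : IsStarProjection (q x y) :=
  ⟨hq.2.1 x y, hq.1 x y⟩

theorem swap (hq : IsQuantumPermutation q) : IsQuantumPermutation (swap q) :=
  ⟨fun x y => hq.1 y x, fun x y => hq.2.1 y x, hq.2.2.2, hq.2.2.1⟩

theorem mul_eq_zero_of_ne (hq : IsQuantumPermutation q) {x x' : X} (h : x ≠ x') (y : X) :
    q x y * q x' y = 0 :=
  mul_eq_zero_of_sum_eq_one (p := fun x => q x y) (fun x => hq.isStarProjection x y) (hq.2.2.2 y) h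

end IsQuantumPermutation

end Projections

theorem sum_mul_mul_eq_sum_mul {A V R : Type*} [Semiring A] [Fintype V] [Fintype R]
    [DecidableEq R] {a b c : V × R → A} (hb : ∑ x, b x = 1)
    (hbc : ∀ i r y, r ≠ y.2 → b (i, r) * c y = 0) :
    ∑ τ : V × V × R, a τ.2 * b (τ.1, τ.2.2) * c τ.2 = ∑ y, a y * c y :=
  calc ∑ τ : V × V × R, a τ.2 * b (τ.1, τ.2.2) * c τ.2
      = ∑ y, ∑ i, a y * b (i, y.2) * c y := by rw [Fintype.sum_prod_type, sum_comm]
    _ = ∑ y, ∑ x, a y * b x * c y := by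
      refine sum_congr rfl fun y _ => ?_
      rw [Fintype.sum_prod_type]
      refine sum_congr rfl fun i _ => ?_
      rw [sum_eq_single y.2 (fun r _ hr => by rw [mul_assoc, hbc i r y hr, mul_zero]) (by simp)]
    _ = ∑ y, a y * c y := by simp_rw [← sum_mul, ← mul_sum, hb, mul_one]

section Graph

variable {V : Type*} {N : ℕ}

@[simps]
def reverseEdge {R : Type*} : V × V × R ≃ V × V × R where
  toFun τ := (τ.2.1, τ.1, τ.2.2)
  invFun τ := (τ.2.1, τ.1, τ.2.2)
  left_inv _ := rfl
  right_inv _ := rfl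

theorem mem_map_reverseEdge {R : Type*} {E : Finset (V × V × R)} {i j : V} {r : R} :
    (i, j, r) ∈ E.map reverseEdge.toEmbedding ↔ (j, i, r) ∈ E := by
  simp [mem_map_equiv]

variable [DecidableEq V]

theorem edeg_map_reverseEdge (E : Finset (V × V × Fin N)) (i j : V) :
    edeg (E.map reverseEdge.toEmbedding) i j = edeg E j i := by
  simp only [edeg, filter_map, card_map]
  congr 1
  exact filter_congr fun _ _ => by simp [and_comm]

theorem mem_of_edeg_eq {E : Finset (V × V × Fin N)} {i j : V} (h : edeg E i j = N) (r : Fin N) :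
    (i, j, r) ∈ E := by
  let edgesAt : Fin N ↪ V × V × Fin N := ⟨fun t => (i, j, t), fun _ _ => by simp⟩
  have hsub : E.filter (fun e => e.1 = i ∧ e.2.1 = j) ⊆ univ.map edgesAt := by
    rintro ⟨a, b, t⟩ he
    simp only [mem_filter] at he
    obtain ⟨-, rfl, rfl⟩ := he
    exact mem_map_of_mem edgesAt (mem_univ t)
  have heq := eq_of_subset_of_card_le hsub (by simp [← h, edeg])
  have hr : (i, j, r) ∈ E.filter (fun e => e.1 = i ∧ e.2.1 = j) :=
    heq ▸ mem_map_of_mem edgesAt (mem_univ r)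
  exact (mem_filter.1 hr).1

def IsUniform (E : Finset (V × V × Fin N)) : Prop :=
  ∀ i j, edeg E i j = 0 ∨ edeg E i j = N

theorem IsUniform.edeg_eq_zero_of_notMem {E : Finset (V × V × Fin N)} (hE : IsUniform E)
    {i j : V} {r : Fin N} (h : (i, j, r) ∉ E) : edeg E i j = 0 :=
  (hE i j).resolve_right fun hN => h (mem_of_edeg_eq hN r)

theorem IsUniform.map_reverseEdge {E : Finset (V × V × Fin N)} (hE : IsUniform E) :
    IsUniform (E.map reverseEdge.toEmbedding) := fun i j => by
  simpa only [edeg_map_reverseEdge] using hE j i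

end Graph

section EdgeMatrix

variable {A : Type*} [CStarAlgebra A] {V : Type*} {N : ℕ}

/-- `edgeEntry q (k, l, s) (i, j, r)` is `u^{(k,l)s}_{(i,j)r} = q^{ks}_{ir} q^{ls}_{jr}`. -/
def edgeEntry {R : Type*} (q : V × R → V × R → A) (σ τ : V × V × R) : A :=
  q (σ.1, σ.2.2) (τ.1, τ.2.2) * q (σ.2.1, σ.2.2) (τ.2.1, τ.2.2)

theorem edgeEntry_eq_star_edgeEntry_swap {R : Type*} {q : V × R → V × R → A}
    (hq : ∀ x y, star (q x y) = q x y) (σ τ : V × V × R) :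
    edgeEntry q τ σ = star (edgeEntry (swap q) (reverseEdge σ) (reverseEdge τ)) := by
  simp [edgeEntry, star_mul, hq]

variable [DecidableEq V]

/-- The relations (R2) and (R3). -/
def EdgeRelations (E : Finset (V × V × Fin N)) (q : V × Fin N → V × Fin N → A) : Prop :=
  (∀ (i j k l : V) (r s s' : Fin N), (i, j, r) ∈ E → edeg E k l = 0 →
    q (k, s) (i, r) * q (l, s') (j, r) = 0) ∧
  (∀ (i j k l : V) (r s s' : Fin N), (i, j, r) ∈ E → edeg E k l ≠ 0 → s ≠ s' →
    q (k, s) (i, r) * q (l, s') (j, r) = 0)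

variable {E : Finset (V × V × Fin N)} {q : V × Fin N → V × Fin N → A}

theorem EdgeRelations.mul_eq_zero (h : EdgeRelations E q) {i j k l : V} {r s s' : Fin N}
    (hτ : (i, j, r) ∈ E) (hkl : edeg E k l = 0 ∨ s ≠ s') :
    q (k, s) (i, r) * q (l, s') (j, r) = 0 := by
  by_cases h0 : edeg E k l = 0
  · exact h.1 i j k l r s s' hτ h0
  · exact h.2 i j k l r s s' hτ h0 (hkl.resolve_left h0)

theorem EdgeRelations.map_reverseEdge (h : EdgeRelations E q)
    (hq : ∀ x y, star (q x y) = q x y) : EdgeRelations (E.map reverseEdge.toEmbedding) q := by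
  have key : ∀ {i j k l : V} {r s s' : Fin N}, (i, j, r) ∈ E.map reverseEdge.toEmbedding →
      edeg (E.map reverseEdge.toEmbedding) k l = 0 ∨ s ≠ s' →
      q (k, s) (i, r) * q (l, s') (j, r) = 0 := fun hτ hkl => by
    rw [mem_map_reverseEdge] at hτ
    rw [edeg_map_reverseEdge] at hkl
    have h0 := congrArg star (h.mul_eq_zero hτ (hkl.imp_right Ne.symm))
    rwa [star_mul, hq, hq, star_zero] at h0
  exact ⟨fun _ _ _ _ _ _ _ hτ h0 => key hτ (.inl h0),
    fun _ _ _ _ _ _ _ hτ _ hs => key hτ (.inr hs)⟩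

theorem mul_eq_zero_of_notMem (hE : IsUniform E) (hrel : EdgeRelations E (swap q))
    {k l : V} {s : Fin N} (hσ : (k, l, s) ∈ E) {i j : V} {r r' : Fin N}
    (h : r' ≠ r ∨ (i, j, r) ∉ E) : q (k, s) (i, r') * q (l, s) (j, r) = 0 :=
  hrel.mul_eq_zero hσ (h.symm.imp hE.edeg_eq_zero_of_notMem id)

variable [Fintype V]

theorem sum_star_edgeEntry_mul_edgeEntry (hq : IsQuantumPermutation q) (hE : IsUniform E)
    (hrel : EdgeRelations E (swap q)) (σ : V × V × Fin N) {σ' : V × V × Fin N}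
    (hσ' : σ' ∈ E) :
    ∑ τ ∈ E, star (edgeEntry q σ τ) * edgeEntry q σ' τ = if σ = σ' then 1 else 0 := by
  obtain ⟨k, l, s⟩ := σ
  obtain ⟨k', l', s'⟩ := σ'
  by_cases hks : k = k' ∧ s = s'
  · obtain ⟨rfl, rfl⟩ := hks
    have hterm : ∀ τ : V × V × Fin N,
        star (edgeEntry q (k, l, s) τ) * edgeEntry q (k, l', s) τ =
          q (l, s) τ.2 * q (k, s) (τ.1, τ.2.2) * q (l', s) τ.2 := fun τ => by
      simp only [edgeEntry, star_mul, hq.1]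
      rw [mul_assoc, ← mul_assoc (q (k, s) _), hq.2.1, ← mul_assoc]
    calc ∑ τ ∈ E, star (edgeEntry q (k, l, s) τ) * edgeEntry q (k, l', s) τ
        = ∑ τ : V × V × Fin N, q (l, s) τ.2 * q (k, s) (τ.1, τ.2.2) * q (l', s) τ.2 := by
          rw [sum_congr rfl fun τ _ => hterm τ]
          refine sum_subset (subset_univ E) fun τ _ hτ => ?_
          rw [mul_assoc, mul_eq_zero_of_notMem hE hrel hσ' (.inr hτ), mul_zero]
      _ = ∑ y, q (l, s) y * q (l', s) y :=
          sum_mul_mul_eq_sum_mul (hq.2.2.1 (k, s)) fun _ _ _ hr =>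
            mul_eq_zero_of_notMem hE hrel hσ' (.inl hr)
      _ = if (k, l, s) = (k, l', s) then 1 else 0 := by
          by_cases hl : l = l'
          · subst hl
            simp [hq.2.1, hq.2.2.1]
          · simp [hl, hq.mul_eq_zero_of_ne (x := (l, s)) (x' := (l', s)) (by simp [hl])]
  · rw [if_neg (by simp only [Prod.mk.injEq]; tauto)]
    refine sum_eq_zero fun τ _ => ?_
    simp only [edgeEntry, star_mul, hq.1]
    rw [mul_assoc, ← mul_assoc (q (k, s) _), hq.mul_eq_zero_of_ne (by simpa using hks), zero_mul,
      mul_zero]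

theorem sum_edgeEntry_mul_star_edgeEntry (hq : IsQuantumPermutation q) (hE : IsUniform E)
    (hrel : EdgeRelations E q) (σ : V × V × Fin N) {σ' : V × V × Fin N} (hσ' : σ' ∈ E) :
    ∑ τ ∈ E, edgeEntry q τ σ * star (edgeEntry q τ σ') = if σ = σ' then 1 else 0 := by
  have h := sum_star_edgeEntry_mul_edgeEntry hq.swap hE.map_reverseEdge
    (hrel.map_reverseEdge hq.1) (reverseEdge σ) (mem_map_of_mem _ hσ')
  simp only [sum_map, Equiv.coe_toEmbedding, reverseEdge.apply_eq_iff_eq] at h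
  simpa only [edgeEntry_eq_star_edgeEntry_swap hq.1, star_star] using h

end EdgeMatrix

theorem stmt4_general {A : Type*} [CStarAlgebra A]
    {V : Type*} [Fintype V] [DecidableEq V] {N : ℕ}
    (E : Finset (V × V × Fin N))
    (hUnif : ∀ i j : V, edeg E i j = 0 ∨ edeg E i j = N)
    (q : V × Fin N → V × Fin N → A)
    (hq : IsQuantumPermutation q)
    (hR2 : ∀ (i j k l : V) (r s s' : Fin N), (i, j, r) ∈ E → edeg E k l = 0 →
      q (k, s) (i, r) * q (l, s') (j, r) = 0)
    (hR3 : ∀ (i j k l : V) (r s s' : Fin N), (i, j, r) ∈ E → edeg E k l ≠ 0 → s ≠ s' →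
      q (k, s) (i, r) * q (l, s') (j, r) = 0)
    (hR2' : ∀ (i j k l : V) (r s s' : Fin N), (i, j, r) ∈ E → edeg E k l = 0 →
      q (i, r) (k, s) * q (j, r) (l, s') = 0)
    (hR3' : ∀ (i j k l : V) (r s s' : Fin N), (i, j, r) ∈ E → edeg E k l ≠ 0 → s ≠ s' →
      q (i, r) (k, s) * q (j, r) (l, s') = 0)
    (k l : V) (s : Fin N)
    (k' l' : V) (s' : Fin N) (hk'l's' : (k', l', s') ∈ E) :
    ((∑ τ ∈ E, star (q (k, s) (τ.1, τ.2.2) * q (l, s) (τ.2.1, τ.2.2)) *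
        (q (k', s') (τ.1, τ.2.2) * q (l', s') (τ.2.1, τ.2.2))) =
      if k = k' ∧ l = l' ∧ s = s' then 1 else 0) ∧
    ((∑ τ ∈ E, (q (τ.1, τ.2.2) (k, s) * q (τ.2.1, τ.2.2) (l, s)) *
        star (q (τ.1, τ.2.2) (k', s') * q (τ.2.1, τ.2.2) (l', s'))) =
      if k = k' ∧ l = l' ∧ s = s' then 1 else 0) := by
  have hfirst := sum_star_edgeEntry_mul_edgeEntry hq hUnif ⟨hR2', hR3'⟩ (k, l, s) hk'l's'
  have hsecond := sum_edgeEntry_mul_star_edgeEntry hq hUnif ⟨hR2, hR3⟩ (k, l, s) hk'l's'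
  simp only [Prod.mk.injEq] at hfirst hsecond
  exact ⟨hfirst, hsecond⟩

/-- Unitarity of the contragredient of the edge corepresentation matrix
`u^{(k,l)s}_{(i,j)r} = q^{ks}_{ir} q^{ls}_{jr}` for a uniform multigraph:
`∑_{τ∈E} (u^σ_τ)* u^{σ'}_τ = δ_{σ,σ'} 1` and `∑_{τ∈E} u^τ_σ (u^τ_{σ'})* = δ_{σ,σ'} 1`. -/
theorem stmt4 {A : Type*} [CStarAlgebra A]
    {V : Type*} [Fintype V] [DecidableEq V] {N : ℕ} (hN : 1 ≤ N)
    (E : Finset (V × V × Fin N))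
    (hE : ∀ (i j : V) (r r' : Fin N), (i, j, r) ∈ E → r' ≤ r → (i, j, r') ∈ E)
    (hUnif : ∀ i j : V, edeg E i j = 0 ∨ edeg E i j = N)
    (q : V × Fin N → V × Fin N → A)
    (hq : IsQuantumPermutation q)
    (hR2 : ∀ (i j k l : V) (r s s' : Fin N), (i, j, r) ∈ E → edeg E k l = 0 →
      q (k, s) (i, r) * q (l, s') (j, r) = 0)
    (hR3 : ∀ (i j k l : V) (r s s' : Fin N), (i, j, r) ∈ E → edeg E k l ≠ 0 → s ≠ s' →
      q (k, s) (i, r) * q (l, s') (j, r) = 0)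
    (hR2' : ∀ (i j k l : V) (r s s' : Fin N), (i, j, r) ∈ E → edeg E k l = 0 →
      q (i, r) (k, s) * q (j, r) (l, s') = 0)
    (hR3' : ∀ (i j k l : V) (r s s' : Fin N), (i, j, r) ∈ E → edeg E k l ≠ 0 → s ≠ s' →
      q (i, r) (k, s) * q (j, r) (l, s') = 0)
    (k l : V) (s : Fin N) (hkls : (k, l, s) ∈ E)
    (k' l' : V) (s' : Fin N) (hk'l's' : (k', l', s') ∈ E) :
    ((∑ τ ∈ E, star (q (k, s) (τ.1, τ.2.2) * q (l, s) (τ.2.1, τ.2.2)) *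
        (q (k', s') (τ.1, τ.2.2) * q (l', s') (τ.2.1, τ.2.2))) =
      if k = k' ∧ l = l' ∧ s = s' then 1 else 0) ∧
    ((∑ τ ∈ E, (q (τ.1, τ.2.2) (k, s) * q (τ.2.1, τ.2.2) (l, s)) *
        star (q (τ.1, τ.2.2) (k', s') * q (τ.2.1, τ.2.2) (l', s'))) =
      if k = k' ∧ l = l' ∧ s = s' then 1 else 0) :=
  stmt4_general E hUnif q hq hR2 hR3 hR2' hR3' k l s k' l' s' hk'l's'
end

section
/- Let V be a finite set, N ≥ 1, E ⊆ V × V × {1,…,N}, and A a unital C*-algebra. Let q = (q^{ks}_{ir}) be a quantum permutation matrix over A indexed by V × {1,…,N} satisfying relation (R1): ∑_{r=1}^N q^{ks}_{ir} = ∑_{r=1}^N q^{ks'}_{ir} for all i,k ∈ V and s,s'. For edges (k,l,s),(i,j,r) ∈ E set u^{(i,j)r}_{(k,l)s} := q^{ir}_{ks} q^{jr}_{ls}, and for i,k ∈ V let Q^i_k := ∑_{s'=1}^N q^{is}_{ks'} (independent of the choice of s by (R1)). Then for all k',l' ∈ V and all edges (i,j,r),(k,l,s) ∈ E: Q^i_{k'}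 · u^{(i,j)r}_{(k,l)s} = δ_{k,k'} u^{(i,j)r}_{(k,l)s} and u^{(i,j)r}_{(k,l)s} · Q^j_{l'} = δ_{l,l'} u^{(i,j)r}_{(k,l)s}. -/
open scoped BigOperators

lemma qp_row_orth {X A : Type*} [Fintype X] [DecidableEq X] [CStarAlgebra A]
    {p : X → X → A} (hp : IsQuantumPermutation p) {x y y' : X} (h : y ≠ y') :
    p x y * p x y' = 0 := by
  obtain ⟨hstar, hidem, hrow, _⟩ := hp
  let _ : PartialOrder A := CStarAlgebra.spectralOrder A
  have _ : StarOrderedRing A := CStarAlgebra.spectralOrderedRing A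
  have h2 : ∑ z, p x y * p x z = p x y := by
    rw [← Finset.mul_sum, hrow x, mul_one]
  have h3 : ∑ z ∈ Finset.univ.erase y, p x y * p x z = 0 := by
    have := Finset.add_sum_erase Finset.univ (fun z => p x y * p x z) (Finset.mem_univ y)
    simp only [h2] at this
    have hy : p x y * p x y = p x y := hidem x y
    rw [hy] at this
    exact add_eq_left.mp this
  have h4 : ∑ z ∈ Finset.univ.erase y, (p x y * p x z) * p x y = 0 := by
    rw [← Finset.sum_mul, h3, zero_mul]
  have key : ∀ z ∈ Finset.univ.erase y, (p x y * p x z) * p x y = 0 := by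
    intro z hz
    have hnn : ∀ w ∈ Finset.univ.erase y, 0 ≤ (p x y * p x w) * p x y := by
      intro w _
      have e : star (p x w * p x y) * (p x w * p x y) = (p x y * p x w) * p x y := by
        rw [star_mul, hstar, hstar, ← mul_assoc, mul_assoc (p x y), hidem]
      rw [← e]
      exact star_mul_self_nonneg _
    exact (Finset.sum_eq_zero_iff_of_nonneg hnn).mp h4 z hz
  have h5 : (p x y * p x y') * p x y = 0 := key y' (by simp [Ne.symm h])
  have h6 : star (p x y' * p x y) * (p x y' * p x y) = 0 := by
    rw [star_mul, hstar, hstar, ← mul_assoc, mul_assoc (p x y), hidem]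
    exact h5
  have h7 : p x y' * p x y = 0 := by
    rwa [CStarRing.star_mul_self_eq_zero_iff] at h6
  calc p x y * p x y' = star (p x y' * p x y) := by rw [star_mul, hstar, hstar]
  _ = 0 := by rw [h7, star_zero]

/-- The pair `(α_V, β)` respects the `C(V)`-`C(V)` bimodule structure on `L²(E)`:
`Q^i_{k'} u^{(i,j)r}_{(k,l)s} = δ_{k,k'} u^{(i,j)r}_{(k,l)s}` and
`u^{(i,j)r}_{(k,l)s} Q^j_{l'} = δ_{l,l'} u^{(i,j)r}_{(k,l)s}`, where
`Q^i_k = ∑_{s'} q^{is0}_{ks'}` (independent of `s0` by (R1)) and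
`u^{(i,j)r}_{(k,l)s} = q^{ir}_{ks} q^{jr}_{ls}`. -/
theorem stmt5 {A : Type*} [CStarAlgebra A]
    {V : Type*} [Fintype V] [DecidableEq V] {N : ℕ} (hN : 1 ≤ N)
    (E : Finset (V × V × Fin N))
    (q : V × Fin N → V × Fin N → A)
    (hq : IsQuantumPermutation q)
    (hR1 : ∀ (i k : V) (s s' : Fin N),
      (∑ r : Fin N, q (k, s) (i, r)) = ∑ r : Fin N, q (k, s') (i, r))
    (k' l' : V) (i j : V) (r : Fin N) (hijr : (i, j, r) ∈ E)
    (k l : V) (s : Fin N) (hkls : (k, l, s) ∈ E) (s0 : Fin N) :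
    ((∑ s' : Fin N, q (i, s0) (k', s')) * (q (i, r) (k, s) * q (j, r) (l, s)) =
      if k = k' then q (i, r) (k, s) * q (j, r) (l, s) else 0) ∧
    ((q (i, r) (k, s) * q (j, r) (l, s)) * (∑ s' : Fin N, q (j, s0) (l', s')) =
      if l = l' then q (i, r) (k, s) * q (j, r) (l, s) else 0) := by
  have hidem := hq.2.1
  constructor
  · rw [hR1 k' i s0 r, Finset.sum_mul]
    by_cases hk : k = k'
    · subst hk
      rw [if_pos rfl, Finset.sum_eq_single s]
      · rw [← mul_assoc, hidem]
      · intro s' _ hs'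
        rw [← mul_assoc, qp_row_orth hq (by simp [hs']), zero_mul]
      · simp
    · rw [if_neg hk, Finset.sum_eq_zero]
      intro s' _
      rw [← mul_assoc, qp_row_orth hq (by simp [Ne.symm hk]), zero_mul]
  · rw [hR1 l' j s0 r, Finset.mul_sum]
    by_cases hl : l = l'
    · subst hl
      rw [if_pos rfl, Finset.sum_eq_single s]
      · rw [mul_assoc, hidem]
      · intro s' _ hs'
        rw [mul_assoc, qp_row_orth hq (by simp [Ne.symm hs']), mul_zero]
      · simp
    · rw [if_neg hl, Finset.sum_eq_zero]
      intro s' _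
      rw [mul_assoc, qp_row_orth hq (by simp [hl]), mul_zero]
end

section
/- Let (V,N,E) be a uniform labeled multigraph and A a unital C*-algebra. Let (u^k_i)_{k,i∈V} be a quantum permutation matrix over A indexed by V such that u^k_i u^l_j = 0 whenever |E^k_l| ≠ |E^i_j|. Define q^{ks}_{ir} := δ_{s,r} u^k_i for k,i ∈ V and s,r ∈ {1,…,N}. Then (q^{ks}_{ir}) is a quantum permutation matrix over A indexed by V × {1,…,N} which satisfies relation (R1) (∑_r q^{ks}_{ir} = ∑_r q^{ks'}_{ir} for all i,k,s,s'), relations (R2), (R3), and the flipped relations (R2'), (R3'). -/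
open scoped BigOperators

/-- Given a quantum permutation matrix `(u^k_i)` on the vertex set of a uniform multigraph
with `u^k_i u^l_j = 0` whenever `|E^k_l| ≠ |E^i_j|`, the matrix
`q^{ks}_{ir} := δ_{s,r} u^k_i` is a quantum permutation matrix indexed by `V × {1,…,N}`
satisfying relation (R1), relations (R2), (R3), and the flipped relations (R2'), (R3'). -/
theorem stmt7 {A : Type*} [CStarAlgebra A]
    {V : Type*} [Fintype V] [DecidableEq V] {N : ℕ} (hN : 1 ≤ N)
    (E : Finset (V × V × Fin N))
    (hE : ∀ (i j : V) (r r' : Fin N), (i, j, r) ∈ E → r' ≤ r → (i, j, r') ∈ E)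
    (hUnif : ∀ i j : V, edeg E i j = 0 ∨ edeg E i j = N)
    (u : V → V → A)
    (hu : IsQuantumPermutation u)
    (huE : ∀ k l i j : V, edeg E k l ≠ edeg E i j → u k i * u l j = 0)
    (q : V × Fin N → V × Fin N → A)
    (hqdef : ∀ (k i : V) (s r : Fin N),
      q (k, s) (i, r) = if s = r then u k i else 0) :
    IsQuantumPermutation q ∧
    (∀ (i k : V) (s s' : Fin N),
      (∑ r : Fin N, q (k, s) (i, r)) = ∑ r : Fin N, q (k, s') (i, r)) ∧
    (∀ (i j k l : V) (r s s' : Fin N), (i, j, r) ∈ E → edeg E k l = 0 →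
      q (k, s) (i, r) * q (l, s') (j, r) = 0) ∧
    (∀ (i j k l : V) (r s s' : Fin N), (i, j, r) ∈ E → edeg E k l ≠ 0 → s ≠ s' →
      q (k, s) (i, r) * q (l, s') (j, r) = 0) ∧
    (∀ (i j k l : V) (r s s' : Fin N), (i, j, r) ∈ E → edeg E k l = 0 →
      q (i, r) (k, s) * q (j, r) (l, s') = 0) ∧
    (∀ (i j k l : V) (r s s' : Fin N), (i, j, r) ∈ E → edeg E k l ≠ 0 → s ≠ s' →
      q (i, r) (k, s) * q (j, r) (l, s') = 0) := by

  obtain ⟨hstar, hidem, hrow, hcol⟩ := hu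
  have hmem : ∀ (i j : V) (r : Fin N), (i, j, r) ∈ E → edeg E i j ≠ 0 := by
    intro i j r hr
    have : (i, j, r) ∈ E.filter fun e => e.1 = i ∧ e.2.1 = j :=
      Finset.mem_filter.2 ⟨hr, rfl, rfl⟩
    exact Finset.card_ne_zero_of_mem this
  refine ⟨⟨?_, ?_, ?_, ?_⟩, ?_, ?_, ?_, ?_, ?_⟩
  · rintro ⟨k, s⟩ ⟨i, r⟩
    rw [hqdef]
    split <;> simp [hstar]
  · rintro ⟨k, s⟩ ⟨i, r⟩
    rw [hqdef]
    split <;> simp [hidem]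
  · rintro ⟨k, s⟩
    rw [Fintype.sum_prod_type]
    simp only [hqdef]
    simp [hrow]
  · rintro ⟨i, r⟩
    rw [Fintype.sum_prod_type]
    rw [Finset.sum_comm]
    simp only [hqdef]
    simp [hcol]
  · intro i k s s'
    simp only [hqdef]
    simp
  · intro i j k l r s s' hr h0
    simp only [hqdef]
    split <;> split <;> simp_all
    exact huE k l i j (by rw [h0]; exact fun h => hmem i j r hr h.symm)
  · intro i j k l r s s' hr h0 hss
    simp only [hqdef]
    split <;> split <;> simp_all
  · intro i j k l r s s' hr h0
    simp only [hqdef]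
    split <;> split <;> simp_all
    exact huE i j k l (by rw [h0]; exact hmem _ _ _ hr)
  · intro i j k l r s s' hr h0 hss
    simp only [hqdef]
    split <;> split <;> simp_all
end

section
/- Let A be a unital C*-algebra, V a finite set, (u_{k i})_{k,i∈V} a quantum permutation matrix over A indexed by V, and B a V × V matrix with complex entries. Suppose the matrix U = (u_{k i}) commutes with the matrix B·1 (the V × V matrix over A with entries B_{k i}·1_A), i.e. U (B·1) = (B·1) U in the matrix algebra over A. Then u_{k i} u_{l j} = 0 whenever B_{k l} ≠ B_{i j}. -/
open scoped BigOperators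

/-- Self-adjoint idempotents summing to `1` in a C*-algebra are pairwise orthogonal. -/
lemma ortho_of_sum_one_s8 {A : Type*} [CStarAlgebra A] {X : Type*} [Fintype X] [DecidableEq X]
    (p : X → A) (hstar : ∀ x, star (p x) = p x) (hidem : ∀ x, p x * p x = p x)
    (hsum : ∑ x, p x = 1) : ∀ x y, x ≠ y → p x * p y = 0 := by
  intro x y hxy
  let _ := CStarAlgebra.spectralOrder A
  have _ := CStarAlgebra.spectralOrderedRing A
  set e := p y with he
  have hsum' : ∑ z ∈ Finset.univ.erase y, p z = 1 - e := by
    have := Finset.add_sum_erase Finset.univ p (Finset.mem_univ y)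
    rw [hsum] at this
    rw [eq_sub_iff_add_eq, he, add_comm]
    exact this
  have hzero : ∑ z ∈ Finset.univ.erase y, star (p z * e) * (p z * e) = 0 := by
    have : ∑ z ∈ Finset.univ.erase y, star (p z * e) * (p z * e)
        = e * (∑ z ∈ Finset.univ.erase y, p z) * e := by
      rw [Finset.mul_sum, Finset.sum_mul]
      refine Finset.sum_congr rfl fun z _ => ?_
      rw [star_mul, hstar z, he, hstar y, mul_assoc (p y) (p z), ← mul_assoc (p z), hidem z, ← mul_assoc (p y)]
    rw [this, hsum']
    simp [he, mul_sub, sub_mul, hidem y, ← mul_assoc]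
  have hterm : star (p x * e) * (p x * e) = 0 := by
    have hnn : ∀ z ∈ Finset.univ.erase y, 0 ≤ star (p z * e) * (p z * e) :=
      fun z _ => star_mul_self_nonneg _
    exact (Finset.sum_eq_zero_iff_of_nonneg hnn).mp hzero x
      (Finset.mem_erase.mpr ⟨hxy, Finset.mem_univ x⟩)
  exact (CStarRing.star_mul_self_eq_zero_iff _).mp hterm

/-- If a quantum permutation matrix `U = (u_{ki})` over a unital C*-algebra commutes with
the scalar matrix `B·1`, then `u_{ki} u_{lj} = 0` whenever `B_{kl} ≠ B_{ij}`. -/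
theorem stmt8 {A : Type*} [CStarAlgebra A]
    {V : Type*} [Fintype V] [DecidableEq V]
    (u : V → V → A)
    (hu : IsQuantumPermutation u)
    (B : Matrix V V ℂ)
    (hcomm : Matrix.of u * B.map (algebraMap ℂ A) = B.map (algebraMap ℂ A) * Matrix.of u) :
    ∀ k l i j : V, B k l ≠ B i j → u k i * u l j = 0 := by
  obtain ⟨hstar, hidem, hrow, hcol⟩ := hu
  have rowo : ∀ x y y', y ≠ y' → u x y * u x y' = 0 := fun x =>
    ortho_of_sum_one_s8 (u x) (hstar x) (hidem x) (hrow x)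
  have colo : ∀ y x x', x ≠ x' → u x y * u x' y = 0 := fun y =>
    ortho_of_sum_one_s8 (fun x => u x y) (fun x => hstar x y) (fun x => hidem x y) (hcol y)
  intro k l i j hB
  have hentry : (∑ m, u k m * algebraMap ℂ A (B m j)) = ∑ m, algebraMap ℂ A (B k m) * u m j := by
    have := congrFun (congrFun hcomm k) j
    simpa [Matrix.mul_apply, Matrix.map_apply] using this
  have L : u k i * (∑ m, u k m * algebraMap ℂ A (B m j)) * u l j
      = B i j • (u k i * u l j) := by
    rw [Finset.mul_sum, Finset.sum_mul, Finset.sum_eq_single i]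
    · simp only [Algebra.algebraMap_eq_smul_one, mul_smul_comm, mul_one, smul_mul_assoc]
      rw [hidem k i]
    · intro m _ hm
      rw [← mul_assoc, rowo k i m (Ne.symm hm), zero_mul, zero_mul]
    · intro h; exact absurd (Finset.mem_univ i) h
  have R : u k i * (∑ m, algebraMap ℂ A (B k m) * u m j) * u l j
      = B k l • (u k i * u l j) := by
    rw [Finset.mul_sum, Finset.sum_mul, Finset.sum_eq_single l]
    · simp only [Algebra.algebraMap_eq_smul_one, smul_mul_assoc, one_mul, mul_smul_comm]
      rw [mul_assoc, hidem l j]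
    · intro m _ hm
      simp only [Algebra.algebraMap_eq_smul_one, smul_mul_assoc, one_mul, mul_smul_comm]
      rw [mul_assoc, colo j m l hm, mul_zero, smul_zero]
    · intro h; exact absurd (Finset.mem_univ l) h
  have key : B i j • (u k i * u l j) = B k l • (u k i * u l j) :=
    L.symm.trans (by rw [hentry]; exact R)
  have hz : (B i j - B k l) • (u k i * u l j) = 0 := by
    rw [sub_smul, key, sub_self]
  exact (smul_eq_zero.mp hz).resolve_left (sub_ne_zero.mpr (Ne.symm hB))
end

section
/- Let V be a finite set, N ≥ 1, E ⊆ V × V × {1,…,N} a labeled multigraph (so (i,j,r) ∈ E and r' ≤ r imply (i,j,r') ∈ E), and A a unital C*-algebra. Let q = (q^{ks}_{ir}) be a quantum permutation matrix over A indexed by V × {1,…,N} satisfying relations (R2), (R3) and (R4). Call a pair (k,s) ∈ V × {1,…,N} permissible if there exists l ∈ V with (k,l,s) ∈ E or (l,k,s) ∈ E. If (i,r) is permissible and (k,s) is not permissible, then q^{ks}_{ir} = 0. -/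
open scoped BigOperators

/-- A pair `(k,s)` is permissible if some edge with label `s` has `k` as source or target. -/
def Permissible {V : Type*} {N : ℕ} (E : Finset (V × V × Fin N)) (k : V) (s : Fin N) : Prop :=
  ∃ l : V, (k, l, s) ∈ E ∨ (l, k, s) ∈ E

/-- For a (not necessarily uniform) labeled multigraph, if a quantum permutation matrix `q`
satisfies relations (R2), (R3), (R4), then `q^{ks}_{ir} = 0` whenever `(i,r)` is permissible
and `(k,s)` is not. -/
theorem stmt9 {A : Type*} [CStarAlgebra A]
    {V : Type*} [Fintype V] [DecidableEq V] {N : ℕ} (hN : 1 ≤ N)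
    (E : Finset (V × V × Fin N))
    (hE : ∀ (i j : V) (r r' : Fin N), (i, j, r) ∈ E → r' ≤ r → (i, j, r') ∈ E)
    (q : V × Fin N → V × Fin N → A)
    (hq : IsQuantumPermutation q)
    (hR2 : ∀ (i j k l : V) (r s s' : Fin N), (i, j, r) ∈ E → edeg E k l = 0 →
      q (k, s) (i, r) * q (l, s') (j, r) = 0)
    (hR3 : ∀ (i j k l : V) (r s s' : Fin N), (i, j, r) ∈ E → edeg E k l ≠ 0 → s ≠ s' →
      q (k, s) (i, r) * q (l, s') (j, r) = 0)
    (hR4 : ∀ (i j k l : V) (r s : Fin N), (i, j, r) ∈ E → edeg E k l ≠ 0 → (k, l, s) ∉ E →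
      q (k, s) (i, r) * q (l, s) (j, r) = 0)
    (i k : V) (r s : Fin N)
    (hir : Permissible E i r) (hks : ¬ Permissible E k s) :
    q (k, s) (i, r) = 0 := by
  obtain ⟨j, hj | hj⟩ := hir
  · have h1 := hq.2.2.2 (j, r)
    have h2 : q (k, s) (i, r) = ∑ x : V × Fin N, q (k, s) (i, r) * q x (j, r) := by
      rw [← Finset.mul_sum, h1, mul_one]
    rw [h2]
    apply Finset.sum_eq_zero
    rintro ⟨l, s'⟩ _
    by_cases hd : edeg E k l = 0
    · exact hR2 i j k l r s s' hj hd
    · by_cases hs : s = s'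
      · subst hs
        exact hR4 i j k l r s hj hd (fun h => hks ⟨l, Or.inl h⟩)
      · exact hR3 i j k l r s s' hj hd hs
  · have h1 := hq.2.2.2 (j, r)
    have h2 : q (k, s) (i, r) = ∑ x : V × Fin N, q x (j, r) * q (k, s) (i, r) := by
      rw [← Finset.sum_mul, h1, one_mul]
    rw [h2]
    apply Finset.sum_eq_zero
    rintro ⟨l, s'⟩ _
    by_cases hd : edeg E l k = 0
    · exact hR2 j i l k r s' s hj hd
    · by_cases hs : s' = s
      · subst hs
        exact hR4 j i l k r s' hj hd (fun h => hks ⟨l, Or.inr h⟩)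
      · exact hR3 j i l k r s' s hj hd hs
end

section
/- Let V be a finite set, N ≥ 1, E ⊆ V × V × {1,…,N} a labeled multigraph (not necessarily uniform), and A a unital C*-algebra. Let q = (q^{ks}_{ir}) be a quantum permutation matrix over A indexed by V × {1,…,N} satisfying relations (R2), (R3), (R4) and the flipped relations (R2'), (R3'), (R4'). For edges (k,l,s),(i,j,r) ∈ E set u^{(k,l)s}_{(i,j)r} := q^{ks}_{ir} q^{ls}_{jr}. Then the E × E matrix (u^{σ}_{τ})_{σ,τ∈E} is bi-unitary: for all edges (k,l,s),(k',l',s') ∈ E, ∑_{(i,j,r)∈E} u^{(k,l)s}_{(i,j)r} (u^{(k',l')s'}_{(i,j)r})* = δ_{k,k'}δ_{l,l'}δ_{s,s'}·1, ∑_{(i,j,r)∈E} (u^{(i,j)r}_{(k,l)s})* u^{(i,j)r}_{(k',l')s'} = δ_{k,k'}δ_{l,l'}δ_{s,s'}·1, ∑_{(i,j,r)∈E} (u^{(k,l)s}_{(i,j)r})* u^{(k',l')s'}_{(i,j)r} = δ_{k,k'}δ_{l,l'}δ_{s,s'}·1, and ∑_{(i,j,r)∈E} u^{(i,j)r}_{(k,l)s}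 (u^{(i,j)r}_{(k',l')s'})* = δ_{k,k'}δ_{l,l'}δ_{s,s'}·1. -/
open scoped BigOperators

lemma orth_of_sum_one {A : Type*} [CStarAlgebra A] {ι : Type*} [Fintype ι] [DecidableEq ι]
    (p : ι → A) (hsa : ∀ i, star (p i) = p i) (hid : ∀ i, p i * p i = p i)
    (hsum : ∑ i, p i = 1) {i j : ι} (hij : i ≠ j) : p i * p j = 0 := by
  letI := CStarAlgebra.spectralOrder A
  haveI := CStarAlgebra.spectralOrderedRing A
  have h1 : (∑ t ∈ Finset.univ.erase i, p t) = 1 - p i := by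
    rw [eq_sub_iff_add_eq, Finset.sum_erase_add _ _ (Finset.mem_univ i)]
    exact hsum
  have key : ∑ t ∈ Finset.univ.erase i, p i * p t * p i = 0 := by
    rw [← Finset.sum_mul, ← Finset.mul_sum, h1, mul_sub, mul_one, hid i, sub_self, zero_mul]
  have hnn : ∀ t ∈ Finset.univ.erase i, 0 ≤ p i * p t * p i := by
    intro t _
    have h2 : p i * p t * p i = star (p t * p i) * (p t * p i) := by
      rw [star_mul, hsa, hsa]
      conv_rhs => rw [← mul_assoc, mul_assoc (p i), hid t]
    rw [h2]; exact star_mul_self_nonneg _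
  have hj : p i * p j * p i = 0 :=
    (Finset.sum_eq_zero_iff_of_nonneg hnn).mp key j
      (Finset.mem_erase.mpr ⟨fun h => hij h.symm, Finset.mem_univ j⟩)
  have h3 : star (p j * p i) * (p j * p i) = 0 := by
    rw [star_mul, hsa, hsa]
    calc p i * p j * (p j * p i) = p i * (p j * p j) * p i := by
          rw [mul_assoc, mul_assoc, ← mul_assoc (p j)]
    _ = p i * p j * p i := by rw [hid j]
    _ = 0 := hj
  have h4 : p j * p i = 0 := (CStarRing.star_mul_self_eq_zero_iff _).mp h3
  calc p i * p j = star (p j * p i) := by rw [star_mul, hsa, hsa]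
  _ = 0 := by rw [h4, star_zero]

lemma mul_mul_zero' {A : Type*} [Ring A] (a b c d : A) (h : b * c = 0) :
    a * b * (c * d) = 0 := by
  rw [mul_assoc, ← mul_assoc b, h, zero_mul, mul_zero]

lemma mul_mul_idem' {A : Type*} [Ring A] (a b c : A) (h : b * b = b) :
    a * b * (b * c) = a * b * c := by
  rw [mul_assoc a, ← mul_assoc b b c, h, ← mul_assoc]

lemma core1 {A : Type*} [Ring A] {α β γ : Type*} [Fintype α] [Fintype β] [Fintype γ]
    [DecidableEq α] [DecidableEq β] [DecidableEq γ]
    (T : Finset (α × β × γ)) (f h : α → γ → A) (g : β → γ → A)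
    (hoff : ∀ x y r, (x, y, r) ∉ T → f x r * g y r = 0)
    (hcross : ∀ x y r r', r ≠ r' → g y r' * h x r = 0)
    (hgsum : ∑ p : β × γ, g p.1 p.2 = 1) :
    ∑ τ ∈ T, f τ.1 τ.2.2 * g τ.2.1 τ.2.2 * h τ.1 τ.2.2
      = ∑ p : α × γ, f p.1 p.2 * h p.1 p.2 := by
  classical
  have h1 : ∑ τ ∈ T, f τ.1 τ.2.2 * g τ.2.1 τ.2.2 * h τ.1 τ.2.2
      = ∑ τ : α × β × γ, f τ.1 τ.2.2 * g τ.2.1 τ.2.2 * h τ.1 τ.2.2 := by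
    apply Finset.sum_subset (Finset.subset_univ T)
    intro τ _ hτ
    obtain ⟨x, y, r⟩ := τ
    rw [hoff x y r hτ, zero_mul]
  rw [h1, Fintype.sum_prod_type, Fintype.sum_prod_type]
  simp only [Fintype.sum_prod_type]
  refine Finset.sum_congr rfl fun x _ => ?_
  rw [Finset.sum_comm]
  refine Finset.sum_congr rfl fun r _ => ?_
  have h2 : f x r * h x r = ∑ y, ∑ r', f x r * (g y r' * h x r) := by
    calc f x r * h x r = f x r * (1 * h x r) := by rw [one_mul]
    _ = f x r * ((∑ p : β × γ, g p.1 p.2) * h x r) := by rw [hgsum]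
    _ = ∑ p : β × γ, f x r * (g p.1 p.2 * h x r) := by
        rw [Finset.sum_mul, Finset.mul_sum]
    _ = ∑ y, ∑ r', f x r * (g y r' * h x r) := by rw [Fintype.sum_prod_type]
  rw [h2]
  refine Finset.sum_congr rfl fun y _ => ?_
  rw [Finset.sum_eq_single r]
  · rw [mul_assoc]
  · intro r' _ hr'
    rw [hcross x y r r' (fun hh => hr' hh.symm), mul_zero]
  · intro habs; exact absurd (Finset.mem_univ r) habs

lemma core2 {A : Type*} [Ring A] {α β γ : Type*} [Fintype α] [Fintype β] [Fintype γ]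
    [DecidableEq α] [DecidableEq β] [DecidableEq γ]
    (T : Finset (α × β × γ)) (f h : β → γ → A) (g : α → γ → A)
    (hoff : ∀ x y r, (x, y, r) ∉ T → f y r * g x r = 0)
    (hcross : ∀ x y r r', r ≠ r' → g x r' * h y r = 0)
    (hgsum : ∑ p : α × γ, g p.1 p.2 = 1) :
    ∑ τ ∈ T, f τ.2.1 τ.2.2 * g τ.1 τ.2.2 * h τ.2.1 τ.2.2
      = ∑ p : β × γ, f p.1 p.2 * h p.1 p.2 := by
  classical
  have h1 : ∑ τ ∈ T, f τ.2.1 τ.2.2 * g τ.1 τ.2.2 * h τ.2.1 τ.2.2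
      = ∑ τ : α × β × γ, f τ.2.1 τ.2.2 * g τ.1 τ.2.2 * h τ.2.1 τ.2.2 := by
    apply Finset.sum_subset (Finset.subset_univ T)
    intro τ _ hτ
    obtain ⟨x, y, r⟩ := τ
    rw [hoff x y r hτ, zero_mul]
  rw [h1, Fintype.sum_prod_type]
  simp only [Fintype.sum_prod_type]
  rw [Finset.sum_comm]
  refine Finset.sum_congr rfl fun y _ => ?_
  rw [Finset.sum_comm]
  refine Finset.sum_congr rfl fun r _ => ?_
  have h2 : f y r * h y r = ∑ x, ∑ r', f y r * (g x r' * h y r) := by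
    calc f y r * h y r = f y r * (1 * h y r) := by rw [one_mul]
    _ = f y r * ((∑ p : α × γ, g p.1 p.2) * h y r) := by rw [hgsum]
    _ = ∑ p : α × γ, f y r * (g p.1 p.2 * h y r) := by
        rw [Finset.sum_mul, Finset.mul_sum]
    _ = ∑ x, ∑ r', f y r * (g x r' * h y r) := by rw [Fintype.sum_prod_type]
  rw [h2]
  refine Finset.sum_congr rfl fun x _ => ?_
  rw [Finset.sum_eq_single r]
  · rw [mul_assoc]
  · intro r' _ hr'
    rw [hcross x y r r' (fun hh => hr' hh.symm), mul_zero]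
  · intro habs; exact absurd (Finset.mem_univ r) habs

/-- For a (not necessarily uniform) labeled multigraph, if a quantum permutation matrix `q`
satisfies relations (R2), (R3), (R4) and the flipped relations (R2'), (R3'), (R4'), then the
`E × E` matrix with entries `u^{(k,l)s}_{(i,j)r} = q^{ks}_{ir} q^{ls}_{jr}` is bi-unitary. -/
theorem stmt10 {A : Type*} [CStarAlgebra A]
    {V : Type*} [Fintype V] [DecidableEq V] {N : ℕ} (hN : 1 ≤ N)
    (E : Finset (V × V × Fin N))
    (hE : ∀ (i j : V) (r r' : Fin N), (i, j, r) ∈ E → r' ≤ r → (i, j, r') ∈ E)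
    (q : V × Fin N → V × Fin N → A)
    (hq : IsQuantumPermutation q)
    (hR2 : ∀ (i j k l : V) (r s s' : Fin N), (i, j, r) ∈ E → edeg E k l = 0 →
      q (k, s) (i, r) * q (l, s') (j, r) = 0)
    (hR3 : ∀ (i j k l : V) (r s s' : Fin N), (i, j, r) ∈ E → edeg E k l ≠ 0 → s ≠ s' →
      q (k, s) (i, r) * q (l, s') (j, r) = 0)
    (hR4 : ∀ (i j k l : V) (r s : Fin N), (i, j, r) ∈ E → edeg E k l ≠ 0 → (k, l, s) ∉ E →
      q (k, s) (i, r) * q (l, s) (j, r) = 0)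
    (hR2' : ∀ (i j k l : V) (r s s' : Fin N), (i, j, r) ∈ E → edeg E k l = 0 →
      q (i, r) (k, s) * q (j, r) (l, s') = 0)
    (hR3' : ∀ (i j k l : V) (r s s' : Fin N), (i, j, r) ∈ E → edeg E k l ≠ 0 → s ≠ s' →
      q (i, r) (k, s) * q (j, r) (l, s') = 0)
    (hR4' : ∀ (i j k l : V) (r s : Fin N), (i, j, r) ∈ E → edeg E k l ≠ 0 → (k, l, s) ∉ E →
      q (i, r) (k, s) * q (j, r) (l, s) = 0)
    (k l : V) (s : Fin N) (hkls : (k, l, s) ∈ E)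
    (k' l' : V) (s' : Fin N) (hk'l's' : (k', l', s') ∈ E) :
    ((∑ τ ∈ E, (q (k, s) (τ.1, τ.2.2) * q (l, s) (τ.2.1, τ.2.2)) *
        star (q (k', s') (τ.1, τ.2.2) * q (l', s') (τ.2.1, τ.2.2))) =
      if k = k' ∧ l = l' ∧ s = s' then 1 else 0) ∧
    ((∑ τ ∈ E, star (q (τ.1, τ.2.2) (k, s) * q (τ.2.1, τ.2.2) (l, s)) *
        (q (τ.1, τ.2.2) (k', s') * q (τ.2.1, τ.2.2) (l', s'))) =
      if k = k' ∧ l = l' ∧ s = s' then 1 else 0) ∧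
    ((∑ τ ∈ E, star (q (k, s) (τ.1, τ.2.2) * q (l, s) (τ.2.1, τ.2.2)) *
        (q (k', s') (τ.1, τ.2.2) * q (l', s') (τ.2.1, τ.2.2))) =
      if k = k' ∧ l = l' ∧ s = s' then 1 else 0) ∧
    ((∑ τ ∈ E, (q (τ.1, τ.2.2) (k, s) * q (τ.2.1, τ.2.2) (l, s)) *
        star (q (τ.1, τ.2.2) (k', s') * q (τ.2.1, τ.2.2) (l', s'))) =
      if k = k' ∧ l = l' ∧ s = s' then 1 else 0) := by
  obtain ⟨hsa, hid, hrow, hcol⟩ := hq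
  have rowOrth : ∀ (x : V × Fin N) {y y' : V × Fin N}, y ≠ y' → q x y * q x y' = 0 :=
    fun x _ _ h => orth_of_sum_one (fun y => q x y) (fun y => hsa x y) (fun y => hid x y)
      (hrow x) h
  have colOrth : ∀ (y : V × Fin N) {x x' : V × Fin N}, x ≠ x' → q x y * q x' y = 0 :=
    fun y _ _ h => orth_of_sum_one (fun x => q x y) (fun x => hsa x y) (fun x => hid x y)
      (hcol y) h
  have qswap : ∀ (x₁ y₁ x₂ y₂ : V × Fin N), q x₁ y₁ * q x₂ y₂ = 0 → q x₂ y₂ * q x₁ y₁ = 0 := by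
    intro x₁ y₁ x₂ y₂ h0
    have : q x₂ y₂ * q x₁ y₁ = star (q x₁ y₁ * q x₂ y₂) := by rw [star_mul, hsa, hsa]
    rw [this, h0, star_zero]
  have A0 : ∀ (a b : V) (c : Fin N), (a, b, c) ∈ E → ∀ (i j : V) (r r' : Fin N),
      r ≠ r' → q (a, c) (i, r) * q (b, c) (j, r') = 0 := by
    intro a b c habc i j r r' hrr
    by_cases hd : edeg E i j = 0
    · exact hR2' a b i j c r r' habc hd
    · exact hR3' a b i j c r r' habc hd hrr
  have A1 : ∀ (a b : V) (c : Fin N), (a, b, c) ∈ E → ∀ (i j : V) (r : Fin N),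
      (i, j, r) ∉ E → q (a, c) (i, r) * q (b, c) (j, r) = 0 := by
    intro a b c habc i j r hn
    by_cases hd : edeg E i j = 0
    · exact hR2' a b i j c r r habc hd
    · exact hR4' a b i j c r habc hd hn
  have B0 : ∀ (a b : V) (c : Fin N), (a, b, c) ∈ E → ∀ (i j : V) (r r' : Fin N),
      r ≠ r' → q (i, r) (a, c) * q (j, r') (b, c) = 0 := by
    intro a b c habc i j r r' hrr
    by_cases hd : edeg E i j = 0
    · exact hR2 a b i j c r r' habc hd
    · exact hR3 a b i j c r r' habc hd hrr
  have B1 : ∀ (a b : V) (c : Fin N), (a, b, c) ∈ E → ∀ (i j : V) (r : Fin N),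
      (i, j, r) ∉ E → q (i, r) (a, c) * q (j, r) (b, c) = 0 := by
    intro a b c habc i j r hn
    by_cases hd : edeg E i j = 0
    · exact hR2 a b i j c r r habc hd
    · exact hR4 a b i j c r habc hd hn
  refine ⟨?_, ?_, ?_, ?_⟩
  -- Goal 1 : ∑ u u*
  · by_cases hls : l = l' ∧ s = s'
    · obtain ⟨rfl, rfl⟩ := hls
      have hterm : ∀ τ ∈ E,
          (q (k, s) (τ.1, τ.2.2) * q (l, s) (τ.2.1, τ.2.2)) *
            star (q (k', s) (τ.1, τ.2.2) * q (l, s) (τ.2.1, τ.2.2))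
          = q (k, s) (τ.1, τ.2.2) * q (l, s) (τ.2.1, τ.2.2) * q (k', s) (τ.1, τ.2.2) := by
        intro τ _
        rw [star_mul, hsa, hsa]
        exact mul_mul_idem' _ _ _ (hid _ _)
      calc (∑ τ ∈ E, (q (k, s) (τ.1, τ.2.2) * q (l, s) (τ.2.1, τ.2.2)) *
              star (q (k', s) (τ.1, τ.2.2) * q (l, s) (τ.2.1, τ.2.2)))
          = ∑ τ ∈ E, q (k, s) (τ.1, τ.2.2) * q (l, s) (τ.2.1, τ.2.2) * q (k', s) (τ.1, τ.2.2) :=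
            Finset.sum_congr rfl hterm
        _ = ∑ p : V × Fin N, q (k, s) (p.1, p.2) * q (k', s) (p.1, p.2) :=
            core1 E (fun x r => q (k, s) (x, r)) (fun x r => q (k', s) (x, r))
              (fun y r => q (l, s) (y, r))
              (fun x y r hn => A1 k l s hkls x y r hn)
              (fun x y r r' hr => qswap _ _ _ _ (A0 k' l s hk'l's' x y r r' hr))
              (by simpa using hrow (l, s))
        _ = if k = k' ∧ l = l ∧ s = s then 1 else 0 := by
            by_cases hk : k = k'
            · subst hk
              rw [if_pos ⟨rfl, rfl, rfl⟩]
              calc ∑ p : V × Fin N, q (k, s) (p.1, p.2) * q (k, s) (p.1, p.2)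
                  = ∑ p : V × Fin N, q (k, s) (p.1, p.2) :=
                    Finset.sum_congr rfl fun p _ => hid _ _
                _ = 1 := by simpa using hrow (k, s)
            · rw [if_neg fun h => hk h.1]
              exact Finset.sum_eq_zero fun p _ =>
                colOrth _ (fun hc => hk (congrArg Prod.fst hc))
    · rw [if_neg (fun h => hls ⟨h.2.1, h.2.2⟩)]
      apply Finset.sum_eq_zero
      intro τ _
      rw [star_mul, hsa, hsa]
      exact mul_mul_zero' _ _ _ _
        (colOrth _ (fun hc => hls ⟨congrArg Prod.fst hc, congrArg Prod.snd hc⟩))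
  -- Goal 2 : ∑ u* u (transposed entries)
  · by_cases hks : k = k' ∧ s = s'
    · obtain ⟨rfl, rfl⟩ := hks
      have hterm : ∀ τ ∈ E,
          star (q (τ.1, τ.2.2) (k, s) * q (τ.2.1, τ.2.2) (l, s)) *
            (q (τ.1, τ.2.2) (k, s) * q (τ.2.1, τ.2.2) (l', s))
          = q (τ.2.1, τ.2.2) (l, s) * q (τ.1, τ.2.2) (k, s) * q (τ.2.1, τ.2.2) (l', s) := by
        intro τ _
        rw [star_mul, hsa, hsa]
        exact mul_mul_idem' _ _ _ (hid _ _)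
      calc (∑ τ ∈ E, star (q (τ.1, τ.2.2) (k, s) * q (τ.2.1, τ.2.2) (l, s)) *
              (q (τ.1, τ.2.2) (k, s) * q (τ.2.1, τ.2.2) (l', s)))
          = ∑ τ ∈ E,
              q (τ.2.1, τ.2.2) (l, s) * q (τ.1, τ.2.2) (k, s) * q (τ.2.1, τ.2.2) (l', s) :=
            Finset.sum_congr rfl hterm
        _ = ∑ p : V × Fin N, q (p.1, p.2) (l, s) * q (p.1, p.2) (l', s) :=
            core2 E (fun y r => q (y, r) (l, s)) (fun y r => q (y, r) (l', s))
              (fun x r => q (x, r) (k, s))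
              (fun x y r hn => qswap _ _ _ _ (B1 k l s hkls x y r hn))
              (fun x y r r' hr => B0 k l' s hk'l's' x y r' r (Ne.symm hr))
              (by simpa using hcol (k, s))
        _ = if k = k ∧ l = l' ∧ s = s then 1 else 0 := by
            by_cases hl : l = l'
            · subst hl
              rw [if_pos ⟨rfl, rfl, rfl⟩]
              calc ∑ p : V × Fin N, q (p.1, p.2) (l, s) * q (p.1, p.2) (l, s)
                  = ∑ p : V × Fin N, q (p.1, p.2) (l, s) :=
                    Finset.sum_congr rfl fun p _ => hid _ _
                _ = 1 := by simpa using hcol (l, s)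
            · rw [if_neg fun h => hl h.2.1]
              exact Finset.sum_eq_zero fun p _ =>
                rowOrth _ (fun hc => hl (congrArg Prod.fst hc))
    · rw [if_neg (fun h => hks ⟨h.1, h.2.2⟩)]
      apply Finset.sum_eq_zero
      intro τ _
      rw [star_mul, hsa, hsa]
      exact mul_mul_zero' _ _ _ _
        (rowOrth _ (fun hc => hks ⟨congrArg Prod.fst hc, congrArg Prod.snd hc⟩))
  -- Goal 3 : ∑ u* u
  · by_cases hks : k = k' ∧ s = s'
    · obtain ⟨rfl, rfl⟩ := hks
      have hterm : ∀ τ ∈ E,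
          star (q (k, s) (τ.1, τ.2.2) * q (l, s) (τ.2.1, τ.2.2)) *
            (q (k, s) (τ.1, τ.2.2) * q (l', s) (τ.2.1, τ.2.2))
          = q (l, s) (τ.2.1, τ.2.2) * q (k, s) (τ.1, τ.2.2) * q (l', s) (τ.2.1, τ.2.2) := by
        intro τ _
        rw [star_mul, hsa, hsa]
        exact mul_mul_idem' _ _ _ (hid _ _)
      calc (∑ τ ∈ E, star (q (k, s) (τ.1, τ.2.2) * q (l, s) (τ.2.1, τ.2.2)) *
              (q (k, s) (τ.1, τ.2.2) * q (l', s) (τ.2.1, τ.2.2)))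
          = ∑ τ ∈ E,
              q (l, s) (τ.2.1, τ.2.2) * q (k, s) (τ.1, τ.2.2) * q (l', s) (τ.2.1, τ.2.2) :=
            Finset.sum_congr rfl hterm
        _ = ∑ p : V × Fin N, q (l, s) (p.1, p.2) * q (l', s) (p.1, p.2) :=
            core2 E (fun y r => q (l, s) (y, r)) (fun y r => q (l', s) (y, r))
              (fun x r => q (k, s) (x, r))
              (fun x y r hn => qswap _ _ _ _ (A1 k l s hkls x y r hn))
              (fun x y r r' hr => A0 k l' s hk'l's' x y r' r (Ne.symm hr))
              (by simpa using hrow (k, s))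
        _ = if k = k ∧ l = l' ∧ s = s then 1 else 0 := by
            by_cases hl : l = l'
            · subst hl
              rw [if_pos ⟨rfl, rfl, rfl⟩]
              calc ∑ p : V × Fin N, q (l, s) (p.1, p.2) * q (l, s) (p.1, p.2)
                  = ∑ p : V × Fin N, q (l, s) (p.1, p.2) :=
                    Finset.sum_congr rfl fun p _ => hid _ _
                _ = 1 := by simpa using hrow (l, s)
            · rw [if_neg fun h => hl h.2.1]
              exact Finset.sum_eq_zero fun p _ =>
                colOrth _ (fun hc => hl (congrArg Prod.fst hc))
    · rw [if_neg (fun h => hks ⟨h.1, h.2.2⟩)]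
      apply Finset.sum_eq_zero
      intro τ _
      rw [star_mul, hsa, hsa]
      exact mul_mul_zero' _ _ _ _
        (colOrth _ (fun hc => hks ⟨congrArg Prod.fst hc, congrArg Prod.snd hc⟩))
  -- Goal 4 : ∑ u u* (transposed entries)
  · by_cases hls : l = l' ∧ s = s'
    · obtain ⟨rfl, rfl⟩ := hls
      have hterm : ∀ τ ∈ E,
          (q (τ.1, τ.2.2) (k, s) * q (τ.2.1, τ.2.2) (l, s)) *
            star (q (τ.1, τ.2.2) (k', s) * q (τ.2.1, τ.2.2) (l, s))
          = q (τ.1, τ.2.2) (k, s) * q (τ.2.1, τ.2.2) (l, s) * q (τ.1, τ.2.2) (k', s) := by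
        intro τ _
        rw [star_mul, hsa, hsa]
        exact mul_mul_idem' _ _ _ (hid _ _)
      calc (∑ τ ∈ E, (q (τ.1, τ.2.2) (k, s) * q (τ.2.1, τ.2.2) (l, s)) *
              star (q (τ.1, τ.2.2) (k', s) * q (τ.2.1, τ.2.2) (l, s)))
          = ∑ τ ∈ E,
              q (τ.1, τ.2.2) (k, s) * q (τ.2.1, τ.2.2) (l, s) * q (τ.1, τ.2.2) (k', s) :=
            Finset.sum_congr rfl hterm
        _ = ∑ p : V × Fin N, q (p.1, p.2) (k, s) * q (p.1, p.2) (k', s) :=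
            core1 E (fun x r => q (x, r) (k, s)) (fun x r => q (x, r) (k', s))
              (fun y r => q (y, r) (l, s))
              (fun x y r hn => B1 k l s hkls x y r hn)
              (fun x y r r' hr => qswap _ _ _ _ (B0 k' l s hk'l's' x y r r' hr))
              (by simpa using hcol (l, s))
        _ = if k = k' ∧ l = l ∧ s = s then 1 else 0 := by
            by_cases hk : k = k'
            · subst hk
              rw [if_pos ⟨rfl, rfl, rfl⟩]
              calc ∑ p : V × Fin N, q (p.1, p.2) (k, s) * q (p.1, p.2) (k, s)
                  = ∑ p : V × Fin N, q (p.1, p.2) (k, s) :=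
                    Finset.sum_congr rfl fun p _ => hid _ _
                _ = 1 := by simpa using hcol (k, s)
            · rw [if_neg fun h => hk h.1]
              exact Finset.sum_eq_zero fun p _ =>
                rowOrth _ (fun hc => hk (congrArg Prod.fst hc))
    · rw [if_neg (fun h => hls ⟨h.2.1, h.2.2⟩)]
      apply Finset.sum_eq_zero
      intro τ _
      rw [star_mul, hsa, hsa]
      exact mul_mul_zero' _ _ _ _
        (rowOrth _ (fun hc => hls ⟨congrArg Prod.fst hc, congrArg Prod.snd hc⟩))
end
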